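/- In the homogeneous case (all firms share the same parameters 𝗉 = (α, λ̄, σ, β^C, β^S) and initial intensity λ₀), the limiting default rate F satisfies the closed integral equation F(t) = 1 - exp( -αλ̄ ∫_0^t b^𝗉(t-r) dr - β^C ∫_0^t F(r) (b^𝗉)'(t-r) dr - b^𝗉(t) λ₀ ), and this equation has a unique continuous solution F : [0,T] → [0,1]. -/

import Mathlib

open MeasureTheory

/-!
Write `ΦF(t)` for the right-hand side of the equation. Along the Riccati flow, `b'` solves the
linear equation `g' = -(σ² b + α) g` with `g 0 = 1`, so `b'(s) = exp (-∫₀ˢ (σ² b + α)) ∈ (0, 1]`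
for `s ≥ 0`. Hence `Φ` keeps `[0,1]`-valued functions inside `[0,1]`, its exponent is nonpositive,
and since `exp` is `1`-Lipschitz on `(-∞, 0]`, `|ΦF(t) - ΦG(t)| ≤ β^C ∫₀ᵗ |F - G|`. Iterating this
Volterra bound, `Φⁿ` is `(β^C T)ⁿ / n!`-Lipschitz for the sup distance on the complete set of
continuous `[0,1]`-valued functions on `[0,T]`, so some iterate of `Φ` is a contraction and `Φ`
has exactly one fixed point there.
-/

open Real Set Function Nat

theorem eq_mul_exp_neg_integral_of_hasDerivAt {g c : ℝ → ℝ} (hc : Continuous c)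
    (hg : ∀ s, HasDerivAt g (-(c s * g s)) s) (s : ℝ) :
    g s = g 0 * exp (-∫ u in (0:ℝ)..s, c u) := by
  set C : ℝ → ℝ := fun x => ∫ u in (0:ℝ)..x, c u
  have hC : ∀ x, HasDerivAt C (c x) x := fun x =>
    (hc.integral_hasStrictDerivAt 0 x).hasDerivAt
  have hconst : ∀ x, HasDerivAt (fun x => g x * exp (C x)) 0 x := fun x => by
    have h : HasDerivAt (fun x => g x * exp (C x)) _ x := (hg x).mul (hC x).exp
    convert h using 1
    ring
  have h := is_const_of_deriv_eq_zero (fun x => (hconst x).differentiableAt)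
    (fun x => (hconst x).deriv) s 0
  simp only [C, intervalIntegral.integral_same, exp_zero, mul_one] at h
  rw [← h, exp_neg, mul_inv_cancel_right₀ (exp_pos _).ne']

section Riccati

variable {α σ : ℝ} {b : ℝ → ℝ}

theorem riccati_deriv_eq_exp (hb0 : b 0 = 0)
    (hode : ∀ s, HasDerivAt b (1 - σ ^ 2 / 2 * b s ^ 2 - α * b s) s) (s : ℝ) :
    deriv b s = exp (-∫ u in (0:ℝ)..s, (σ ^ 2 * b u + α)) := by
  have hb : Continuous b := continuous_iff_continuousAt.2 fun s => (hode s).continuousAt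
  have hg : ∀ s, HasDerivAt (fun s => 1 - σ ^ 2 / 2 * b s ^ 2 - α * b s)
      (-((σ ^ 2 * b s + α) * (1 - σ ^ 2 / 2 * b s ^ 2 - α * b s))) s := fun s => by
    have h : HasDerivAt (fun s => 1 - σ ^ 2 / 2 * b s ^ 2 - α * b s) _ s :=
      ((hode s).pow 2 |>.const_mul (σ ^ 2 / 2) |>.const_sub 1).sub ((hode s).const_mul α)
    convert h using 1
    ring
  rw [(hode s).deriv, eq_mul_exp_neg_integral_of_hasDerivAt (by fun_prop) hg s, hb0]
  ring

theorem riccati_deriv_mem_Icc (hα : 0 ≤ α) (hb0 : b 0 = 0)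
    (hode : ∀ s, HasDerivAt b (1 - σ ^ 2 / 2 * b s ^ 2 - α * b s) s)
    (hb_nonneg : ∀ s, 0 ≤ s → 0 ≤ b s) {s : ℝ} (hs : 0 ≤ s) : deriv b s ∈ Icc 0 1 := by
  rw [riccati_deriv_eq_exp hb0 hode]
  refine ⟨(exp_pos _).le, exp_le_one_iff.2 (neg_nonpos.2 ?_)⟩
  exact intervalIntegral.integral_nonneg hs fun u hu => by
    have := hb_nonneg u hu.1
    positivity

end Riccati

theorem exp_sub_exp_le_of_le_of_nonpos {x y : ℝ} (hxy : x ≤ y) (hy : y ≤ 0) :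
    exp y - exp x ≤ y - x := by
  have h1 : 1 - exp (x - y) ≤ y - x := by linarith [add_one_le_exp (x - y)]
  have h2 : 0 ≤ 1 - exp (x - y) := by linarith [exp_le_one_iff.2 (sub_nonpos.2 hxy)]
  calc exp y - exp x = exp y * (1 - exp (x - y)) := by rw [exp_sub]; field_simp
    _ ≤ 1 * (y - x) := mul_le_mul (exp_le_one_iff.2 hy) h1 h2 zero_le_one
    _ = y - x := one_mul _

theorem abs_exp_sub_exp_le_of_nonpos {x y : ℝ} (hx : x ≤ 0) (hy : y ≤ 0) :
    |exp x - exp y| ≤ |x - y| := by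
  rcases le_total x y with h | h
  · rw [abs_sub_comm, abs_sub_comm x, abs_of_nonneg (exp_le_exp.2 h |> sub_nonneg.2),
      abs_of_nonneg (sub_nonneg.2 h)]
    exact exp_sub_exp_le_of_le_of_nonpos h hy
  · rw [abs_of_nonneg (exp_le_exp.2 h |> sub_nonneg.2), abs_of_nonneg (sub_nonneg.2 h)]
    exact exp_sub_exp_le_of_le_of_nonpos h hx

theorem le_mul_pow_div_factorial_of_le_integral {D : ℕ → ℝ → ℝ} {K M T : ℝ} (hK : 0 ≤ K)
    (hD : ∀ n, ContinuousOn (D n) (Icc 0 T)) (h0 : ∀ t ∈ Icc 0 T, D 0 t ≤ M)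
    (hsucc : ∀ n, ∀ t ∈ Icc 0 T, D (n + 1) t ≤ K * ∫ r in (0:ℝ)..t, D n r) (n : ℕ) :
    ∀ t ∈ Icc 0 T, D n t ≤ M * (K * t) ^ n / n ! := by
  induction n with
  | zero => simpa using h0
  | succ n ih =>
    intro t ht
    have hsub : uIcc 0 t ⊆ Icc 0 T := by
      rw [uIcc_of_le ht.1]
      exact Icc_subset_Icc_right ht.2
    have hint : ∫ r in (0:ℝ)..t, D n r ≤ ∫ r in (0:ℝ)..t, M * K ^ n / n ! * r ^ n := by
      refine intervalIntegral.integral_mono_on ht.1 ((hD n).mono hsub).intervalIntegrable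
        ((by fun_prop : Continuous _).intervalIntegrable _ _) fun r hr => ?_
      have := ih r (hsub (by rwa [uIcc_of_le ht.1]))
      rwa [mul_pow, ← mul_assoc, mul_div_right_comm] at this
    calc D (n + 1) t ≤ K * ∫ r in (0:ℝ)..t, D n r := hsucc n t ht
      _ ≤ K * ∫ r in (0:ℝ)..t, M * K ^ n / n ! * r ^ n := mul_le_mul_of_nonneg_left hint hK
      _ = M * (K * t) ^ (n + 1) / (n + 1) ! := by
        rw [intervalIntegral.integral_const_mul, integral_pow, Nat.factorial_succ]
        push_cast
        field_simp
        ring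

theorem exists_unique_isFixedPt_of_dist_iterate_le {X : Type*} [MetricSpace X] {f : X → X}
    {s : Set X} {C : ℝ} (hs : IsComplete s) (hne : s.Nonempty) (hf : MapsTo f s s)
    (hC : ∀ n, ∀ x ∈ s, ∀ y ∈ s, dist (f^[n] x) (f^[n] y) ≤ C ^ n / n ! * dist x y) :
    ∃! x, x ∈ s ∧ IsFixedPt f x := by
  have : CompleteSpace s := hs.completeSpace_coe
  have : Nonempty s := hne.to_subtype
  obtain ⟨n, hn⟩ : ∃ n : ℕ, C ^ n / n ! < 1 :=
    ((FloorSemiring.tendsto_pow_div_factorial_atTop C).eventually (gt_mem_nhds one_pos)).exists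
  set g := hf.restrict f s s
  have hg : ContractingWith (C ^ n / n !).toNNReal g^[n] := by
    refine ⟨by simpa using hn, LipschitzWith.of_dist_le_mul fun x y => ?_⟩
    simp only [Subtype.dist_eq, g, MapsTo.iterate_restrict, MapsTo.val_restrict_apply]
    exact (hC n x x.2 y y.2).trans (by gcongr; exact le_coe_toNNReal _)
  refine ⟨(ContractingWith.fixedPoint g^[n] hg : s), ⟨Subtype.property _, ?_⟩,
    fun y ⟨hy, hfy⟩ => ?_⟩
  · exact congrArg Subtype.val hg.isFixedPt_fixedPoint_iterate
  · have hgy : IsFixedPt g ⟨y, hy⟩ := Subtype.ext hfy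
    exact congrArg Subtype.val (hg.fixedPoint_unique (hgy.iterate n))

/-- In the paper's notation `a = αλ̄`, `β = β^C`, `l = λ₀`, and the kernel `k` is `(b^𝗉)'`. -/
noncomputable def defaultRateExponent (a β l : ℝ) (b k F : ℝ → ℝ) (t : ℝ) : ℝ :=
  -a * (∫ r in (0:ℝ)..t, b (t - r)) - β * (∫ r in (0:ℝ)..t, F r * k (t - r)) - b t * l

def IsDefaultRate (a β l : ℝ) (b k : ℝ → ℝ) (T : ℝ) (F : ℝ → ℝ) : Prop :=
  ContinuousOn F (Icc 0 T) ∧ (∀ t ∈ Icc (0:ℝ) T, F t ∈ Icc (0:ℝ) 1) ∧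
    ∀ t ∈ Icc (0:ℝ) T, F t = 1 - exp (defaultRateExponent a β l b k F t)

section DefaultRateExponent

variable {a β l : ℝ} {b k F G : ℝ → ℝ} {t : ℝ}

theorem continuous_defaultRateExponent (hb : Continuous b) (hk : Continuous k)
    (hF : Continuous F) : Continuous (defaultRateExponent a β l b k F) := by
  have hF' : Continuous fun t => ∫ r in (0:ℝ)..t, F r * k (t - r) :=
    intervalIntegral.continuous_parametric_intervalIntegral_of_continuous
      (f := fun t r => F r * k (t - r)) (by fun_prop) continuous_id
  have hb' : Continuous fun t => ∫ r in (0:ℝ)..t, b (t - r) :=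
    intervalIntegral.continuous_parametric_intervalIntegral_of_continuous
      (f := fun t r => b (t - r)) (by fun_prop) continuous_id
  unfold defaultRateExponent
  fun_prop

theorem defaultRateExponent_nonpos (ha : 0 ≤ a) (hβ : 0 ≤ β) (hl : 0 ≤ l)
    (hb_nonneg : ∀ s, 0 ≤ s → 0 ≤ b s) (hk_nonneg : ∀ s, 0 ≤ s → 0 ≤ k s) (ht : 0 ≤ t)
    (hF : ∀ r ∈ Icc 0 t, 0 ≤ F r) : defaultRateExponent a β l b k F t ≤ 0 := by
  have hI₁ : 0 ≤ ∫ r in (0:ℝ)..t, b (t - r) :=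
    intervalIntegral.integral_nonneg ht fun r hr => hb_nonneg _ (sub_nonneg.2 hr.2)
  have hI₂ : 0 ≤ ∫ r in (0:ℝ)..t, F r * k (t - r) :=
    intervalIntegral.integral_nonneg ht fun r hr =>
      mul_nonneg (hF r hr) (hk_nonneg _ (sub_nonneg.2 hr.2))
  have := hb_nonneg t ht
  unfold defaultRateExponent
  nlinarith [mul_nonneg ha hI₁, mul_nonneg hβ hI₂, mul_nonneg this hl]

theorem abs_defaultRateExponent_sub_le (hβ : 0 ≤ β) (hk : Continuous k)
    (hk01 : ∀ s, 0 ≤ s → k s ∈ Icc 0 1) (hF : Continuous F) (hG : Continuous G) (ht : 0 ≤ t) :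
    |defaultRateExponent a β l b k F t - defaultRateExponent a β l b k G t|
      ≤ β * ∫ r in (0:ℝ)..t, |F r - G r| := by
  have hsub : defaultRateExponent a β l b k F t - defaultRateExponent a β l b k G t
      = β * ∫ r in (0:ℝ)..t, (G r - F r) * k (t - r) := by
    simp only [defaultRateExponent, sub_mul]
    rw [intervalIntegral.integral_sub ((by fun_prop : Continuous _).intervalIntegrable _ _)
      ((by fun_prop : Continuous _).intervalIntegrable _ _)]
    ring
  rw [hsub, abs_mul, abs_of_nonneg hβ]
  refine mul_le_mul_of_nonneg_left ?_ hβ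
  refine (intervalIntegral.abs_integral_le_integral_abs ht).trans <|
    intervalIntegral.integral_mono_on ht ((by fun_prop : Continuous _).intervalIntegrable _ _)
      ((by fun_prop : Continuous _).intervalIntegrable _ _) fun r hr => ?_
  obtain ⟨hk0, hk1⟩ := hk01 (t - r) (sub_nonneg.2 hr.2)
  rw [abs_mul, abs_of_nonneg hk0, abs_sub_comm]
  exact mul_le_of_le_one_right (abs_nonneg _) hk1

theorem defaultRateExponent_congr (ht : 0 ≤ t) (h : EqOn F G (Icc 0 t)) :
    defaultRateExponent a β l b k F t = defaultRateExponent a β l b k G t := by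
  unfold defaultRateExponent
  congr 3
  refine intervalIntegral.integral_congr fun r hr => ?_
  rw [uIcc_of_le ht] at hr
  simp only [h hr]

end DefaultRateExponent

def unitIntervalValued (T : ℝ) : Set C(Icc (0:ℝ) T, ℝ) := {f | ∀ x, f x ∈ Icc (0:ℝ) 1}

theorem isClosed_unitIntervalValued (T : ℝ) : IsClosed (unitIntervalValued T) := by
  simp only [unitIntervalValued, ofPred_forall]
  exact isClosed_iInter fun x => isClosed_Icc.preimage (continuous_eval_const x)

noncomputable def defaultRateMap (a β l : ℝ) {b k : ℝ → ℝ} (hb : Continuous b)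
    (hk : Continuous k) {T : ℝ} (hT : 0 ≤ T) (f : C(Icc (0:ℝ) T, ℝ)) : C(Icc (0:ℝ) T, ℝ) where
  toFun x := 1 - exp (defaultRateExponent a β l b k (IccExtend hT f) x)
  continuous_toFun :=
    have := continuous_defaultRateExponent (a := a) (β := β) (l := l) hb hk
      f.continuous.Icc_extend'
    by fun_prop

section DefaultRateMap

variable {a β l T : ℝ} {b k : ℝ → ℝ}

theorem mapsTo_defaultRateMap (ha : 0 ≤ a) (hβ : 0 ≤ β) (hl : 0 ≤ l) (hb : Continuous b)
    (hb_nonneg : ∀ s, 0 ≤ s → 0 ≤ b s) (hk : Continuous k) (hk_nonneg : ∀ s, 0 ≤ s → 0 ≤ k s)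
    (hT : 0 ≤ T) :
    MapsTo (defaultRateMap a β l hb hk hT) (unitIntervalValued T) (unitIntervalValued T) :=
  fun _ hf x =>
    have he := defaultRateExponent_nonpos ha hβ hl hb_nonneg hk_nonneg x.2.1
      fun _ _ => (hf _).1
    ⟨sub_nonneg.2 (exp_le_one_iff.2 he), sub_le_self _ (exp_pos _).le⟩

theorem dist_iterate_defaultRateMap_le (ha : 0 ≤ a) (hβ : 0 ≤ β) (hl : 0 ≤ l)
    (hb : Continuous b) (hb_nonneg : ∀ s, 0 ≤ s → 0 ≤ b s) (hk : Continuous k)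
    (hk01 : ∀ s, 0 ≤ s → k s ∈ Icc 0 1) (hT : 0 ≤ T) (n : ℕ)
    {u : C(Icc (0:ℝ) T, ℝ)} (hu : u ∈ unitIntervalValued T)
    {v : C(Icc (0:ℝ) T, ℝ)} (hv : v ∈ unitIntervalValued T) :
    dist ((defaultRateMap a β l hb hk hT)^[n] u) ((defaultRateMap a β l hb hk hT)^[n] v)
      ≤ (β * T) ^ n / n ! * dist u v := by
  set Φ := defaultRateMap a β l hb hk hT
  have hmaps := mapsTo_defaultRateMap ha hβ hl hb hb_nonneg hk (fun s hs => (hk01 s hs).1) hT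
  set D : ℕ → ℝ → ℝ := fun n t => |IccExtend hT (Φ^[n] u) t - IccExtend hT (Φ^[n] v) t|
  have hcont : ∀ {n}, ∀ {w : C(Icc (0:ℝ) T, ℝ)}, Continuous (IccExtend hT (Φ^[n] w)) :=
    (Φ^[_] _).continuous.Icc_extend'
  have hnonpos : ∀ {n} {w}, w ∈ unitIntervalValued T → ∀ {t : ℝ}, 0 ≤ t →
      defaultRateExponent a β l b k (IccExtend hT (Φ^[n] w)) t ≤ 0 := fun hw _ ht =>
    defaultRateExponent_nonpos ha hβ hl hb_nonneg (fun s hs => (hk01 s hs).1) ht fun _ _ =>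
      (hmaps.iterate _ hw _).1
  have h0 : ∀ t ∈ Icc 0 T, D 0 t ≤ dist u v := fun t ht => by
    simp only [D, iterate_zero, id, IccExtend_of_mem hT _ ht, ← Real.dist_eq]
    exact ContinuousMap.dist_apply_le_dist _
  have hsucc : ∀ n, ∀ t ∈ Icc 0 T, D (n + 1) t ≤ β * ∫ r in (0:ℝ)..t, D n r := fun n t ht => by
    simp only [D, iterate_succ_apply', IccExtend_of_mem hT _ ht]
    calc |Φ (Φ^[n] u) ⟨t, ht⟩ - Φ (Φ^[n] v) ⟨t, ht⟩|
        = |exp (defaultRateExponent a β l b k (IccExtend hT (Φ^[n] u)) t)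
            - exp (defaultRateExponent a β l b k (IccExtend hT (Φ^[n] v)) t)| := by
          rw [abs_sub_comm]
          exact congrArg abs (sub_sub_sub_cancel_left _ _ 1)
      _ ≤ _ := abs_exp_sub_exp_le_of_nonpos (hnonpos hu ht.1) (hnonpos hv ht.1)
      _ ≤ _ := abs_defaultRateExponent_sub_le hβ hk hk01 hcont hcont ht.1
  have hD := le_mul_pow_div_factorial_of_le_integral (D := D) hβ
    (fun _ => (hcont.sub hcont).abs.continuousOn) h0 hsucc n
  refine (ContinuousMap.dist_le (by positivity)).2 fun x => ?_
  calc dist ((Φ^[n] u) x) ((Φ^[n] v) x) = D n x := by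
        simp only [D, IccExtend_val, Real.dist_eq]
    _ ≤ dist u v * (β * x) ^ n / n ! := hD x x.2
    _ ≤ (β * T) ^ n / n ! * dist u v := by
      rw [mul_div_assoc, mul_comm]
      gcongr
      · exact mul_nonneg hβ x.2.1
      · exact x.2.2

end DefaultRateMap

section DefaultRateSolution

variable {a β l T : ℝ} {b k : ℝ → ℝ}

theorem isDefaultRate_IccExtend (hb : Continuous b) (hk : Continuous k) (hT : 0 ≤ T)
    {f : C(Icc (0:ℝ) T, ℝ)} (hf : f ∈ unitIntervalValued T)
    (hfix : IsFixedPt (defaultRateMap a β l hb hk hT) f) :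
    IsDefaultRate a β l b k T (IccExtend hT f) := by
  refine ⟨f.continuous.Icc_extend'.continuousOn, fun t ht => ?_, fun t ht => ?_⟩
  · rw [IccExtend_of_mem hT _ ht]
    exact hf _
  · rw [IccExtend_of_mem hT _ ht]
    exact (DFunLike.congr_fun hfix ⟨t, ht⟩).symm

theorem isFixedPt_defaultRateMap_restrict (hb : Continuous b) (hk : Continuous k)
    (hT : 0 ≤ T) {F : ℝ → ℝ} (hF : IsDefaultRate a β l b k T F) :
    IsFixedPt (defaultRateMap a β l hb hk hT) ⟨(Icc 0 T).domRestrict F, hF.1.domRestrict⟩ := by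
  ext x
  have hext : EqOn (IccExtend hT ((Icc 0 T).domRestrict F)) F (Icc 0 x) := fun r hr =>
    IccExtend_of_mem hT _ ⟨hr.1, hr.2.trans x.2.2⟩
  exact (defaultRateExponent_congr x.2.1 hext ▸ hF.2.2 x x.2).symm

theorem existsUnique_isDefaultRate (ha : 0 ≤ a) (hβ : 0 ≤ β) (hl : 0 ≤ l)
    (hb : Continuous b) (hb_nonneg : ∀ s, 0 ≤ s → 0 ≤ b s) (hk : Continuous k)
    (hk01 : ∀ s, 0 ≤ s → k s ∈ Icc 0 1) (hT : 0 ≤ T) :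
    ∃ F, IsDefaultRate a β l b k T F ∧
      ∀ F', IsDefaultRate a β l b k T F' → EqOn F F' (Icc 0 T) := by
  obtain ⟨f, ⟨hf, hfix⟩, huniq⟩ := exists_unique_isFixedPt_of_dist_iterate_le
    (isClosed_unitIntervalValued T).isComplete ⟨0, fun _ => ⟨le_rfl, zero_le_one⟩⟩
    (mapsTo_defaultRateMap ha hβ hl hb hb_nonneg hk (fun s hs => (hk01 s hs).1) hT)
    fun n _ hu _ hv => dist_iterate_defaultRateMap_le ha hβ hl hb hb_nonneg hk hk01 hT n hu hv
  refine ⟨IccExtend hT f, isDefaultRate_IccExtend hb hk hT hf hfix, fun F hF t ht => ?_⟩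
  rw [IccExtend_of_mem hT _ ht,
    ← huniq _ ⟨fun x => hF.2.1 x x.2, isFixedPt_defaultRateMap_restrict hb hk hT hF⟩]
  rfl

end DefaultRateSolution

theorem homogeneous_default_rate_exists_unique_general
    (α lbar σ βC l0 T : ℝ) (hα : 0 ≤ α) (hlbar : 0 ≤ lbar)
    (hβC : 0 ≤ βC) (hl0 : 0 ≤ l0) (hT : 0 < T)
    (b : ℝ → ℝ) (hb0 : b 0 = 0) (hbpos : ∀ s > (0:ℝ), 0 < b s)
    (hode : ∀ s, HasDerivAt b (1 - σ ^ 2 / 2 * (b s) ^ 2 - α * b s) s) :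
    ∃ F : ℝ → ℝ,
      (ContinuousOn F (Set.Icc 0 T) ∧ (∀ t ∈ Set.Icc (0:ℝ) T, F t ∈ Set.Icc (0:ℝ) 1) ∧
        (∀ t ∈ Set.Icc (0:ℝ) T,
          F t = 1 - Real.exp (-(α * lbar) * (∫ r in (0:ℝ)..t, b (t - r))
            - βC * (∫ r in (0:ℝ)..t, F r * deriv b (t - r)) - b t * l0))) ∧
      ∀ F' : ℝ → ℝ,
        (ContinuousOn F' (Set.Icc 0 T) ∧ (∀ t ∈ Set.Icc (0:ℝ) T, F' t ∈ Set.Icc (0:ℝ) 1) ∧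
          (∀ t ∈ Set.Icc (0:ℝ) T,
            F' t = 1 - Real.exp (-(α * lbar) * (∫ r in (0:ℝ)..t, b (t - r))
              - βC * (∫ r in (0:ℝ)..t, F' r * deriv b (t - r)) - b t * l0))) →
        Set.EqOn F F' (Set.Icc 0 T) := by
  have hb : Continuous b := continuous_iff_continuousAt.2 fun s => (hode s).continuousAt
  have hb_nonneg : ∀ s, 0 ≤ s → 0 ≤ b s := fun s hs =>
    hs.eq_or_lt.elim (fun h => h ▸ hb0.ge) fun h => (hbpos s h).le
  have hk : Continuous (deriv b) := by
    rw [funext fun s => (hode s).deriv]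
    fun_prop
  exact existsUnique_isDefaultRate (mul_nonneg hα hlbar) hβC hl0 hb hb_nonneg hk
    (fun s hs => riccati_deriv_mem_Icc hα hb0 hode hb_nonneg hs) hT.le

/-- in the homogeneous case the limiting default rate `F` satisfies
`F(t) = 1 - exp(-αλ̄∫_0^t b(t-r)dr - β^C∫_0^t F(r) b'(t-r)dr - b(t)λ₀)`,
and this integral equation has a unique continuous `[0,1]`-valued solution on `[0,T]`,
where `b` solves the Riccati ODE `b' = 1 - (σ²/2)b² - αb`, `b(0)=0`. -/
theorem homogeneous_default_rate_exists_unique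
    (α lbar σ βC l0 T : ℝ) (hα : 0 ≤ α) (hlbar : 0 ≤ lbar) (hσ : 0 ≤ σ)
    (hβC : 0 ≤ βC) (hl0 : 0 ≤ l0) (hT : 0 < T)
    (b : ℝ → ℝ) (hb0 : b 0 = 0) (hbpos : ∀ s > (0:ℝ), 0 < b s)
    (hode : ∀ s, HasDerivAt b (1 - σ ^ 2 / 2 * (b s) ^ 2 - α * b s) s) :
    ∃ F : ℝ → ℝ,
      (ContinuousOn F (Set.Icc 0 T) ∧ (∀ t ∈ Set.Icc (0:ℝ) T, F t ∈ Set.Icc (0:ℝ) 1) ∧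
        (∀ t ∈ Set.Icc (0:ℝ) T,
          F t = 1 - Real.exp (-(α * lbar) * (∫ r in (0:ℝ)..t, b (t - r))
            - βC * (∫ r in (0:ℝ)..t, F r * deriv b (t - r)) - b t * l0))) ∧
      ∀ F' : ℝ → ℝ,
        (ContinuousOn F' (Set.Icc 0 T) ∧ (∀ t ∈ Set.Icc (0:ℝ) T, F' t ∈ Set.Icc (0:ℝ) 1) ∧
          (∀ t ∈ Set.Icc (0:ℝ) T,
            F' t = 1 - Real.exp (-(α * lbar) * (∫ r in (0:ℝ)..t, b (t - r))
              - βC * (∫ r in (0:ℝ)..t, F' r * deriv b (t - r)) - b t * l0))) →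
        Set.EqOn F F' (Set.Icc 0 T) :=
  homogeneous_default_rate_exists_unique_general α lbar σ βC l0 T hα hlbar hβC hl0 hT b hb0 hbpos
    hode
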